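/- arXiv:0908.0390 — 5 statements merged into one kernel-verified Lean document; each statement's English description precedes it below -/
import Mathlib

section
/- Let n, f be natural numbers with n > 5f, let P be a multiset of n real numbers, and let U be a submultiset of P of cardinality m with m ≥ n − f. Then the (2f+1)-th smallest element of P lies in the interval [min U, max U], i.e., min U ≤ P_{2f+1} ≤ max U. -/
/-!
With `x = P_{2f+1}`, the `2f+1` smallest elements of `P` are `≤ x` and the `n - 2f` largest are
`≥ x`. Only `card (P - U) ≤ f` elements of `P` lie outside `U`, and both `2f+1` and `n - 2f`
exceed `f` (as `n > 3f`), so `U` contains an element `≤ x` and an element `≥ x`.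
-/

/-- `kth P k` is the `k`-th smallest element (1-based, counted with multiplicity)
of the multiset `P` of reals. -/
noncomputable def kth (P : Multiset ℝ) (k : ℕ) : ℝ :=
  (P.sort (· ≤ ·)).getD (k - 1) 0

/-- The minimum of a (nonempty) multiset of reals: its 1st smallest element. -/
noncomputable def mmin (U : Multiset ℝ) : ℝ := kth U 1

/-- The maximum of a (nonempty) multiset of reals: its `card`-th smallest element. -/
noncomputable def mmax (U : Multiset ℝ) : ℝ := kth U (Multiset.card U)

namespace List

variable {α : Type*} [LinearOrder α] {l : List α} {k : ℕ} {a : α}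

lemma Pairwise.le_getElem_of_mem_take (hl : l.Pairwise (· ≤ ·)) (hk : k < l.length)
    (ha : a ∈ l.take (k + 1)) : a ≤ l[k] := by
  rw [← take_concat_get' l k hk, mem_append, mem_singleton] at ha
  rcases ha with ha | rfl
  · refine hl.rel_of_mem_take_of_mem_drop ha ?_
    rw [drop_eq_getElem_cons hk]
    exact mem_cons_self
  · exact le_rfl

lemma Pairwise.getElem_le_of_mem_drop (hl : l.Pairwise (· ≤ ·)) (hk : k < l.length)
    (ha : a ∈ l.drop k) : l[k] ≤ a := by
  rw [drop_eq_getElem_cons hk, mem_cons] at ha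
  rcases ha with rfl | ha
  · exact le_rfl
  · refine hl.rel_of_mem_take_of_mem_drop ?_ ha
    rw [← take_concat_get' l k hk]
    exact mem_append_right _ (mem_singleton_self _)

end List

namespace Multiset

lemma exists_mem_of_card_sub_lt {α : Type*} [DecidableEq α] {S P U : Multiset α}
    (hSP : S ≤ P) (hUP : U ≤ P) (hcard : card (P - U) < card S) : ∃ a ∈ S, a ∈ U := by
  have hS_sub_le : S - (P - U) ≤ U := by
    rw [tsub_le_iff_left, tsub_add_cancel_of_le hUP]
    exact hSP
  have hS_le : S ≤ S - (P - U) + (P - U) := le_tsub_add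
  obtain ⟨a, ha⟩ : ∃ a, a ∈ S - (P - U) := by
    rw [← card_pos_iff_exists_mem]
    have := card_le_card hS_le
    rw [card_add] at this
    omega
  exact ⟨a, mem_of_le tsub_le_self ha, mem_of_le hS_sub_le ha⟩

end Multiset

lemma kth_add_one_eq_getElem (P : Multiset ℝ) {k : ℕ} (hk : k < (P.sort (· ≤ ·)).length) :
    kth P (k + 1) = (P.sort (· ≤ ·))[k] :=
  List.getD_eq_getElem _ _ hk

lemma le_kth_of_mem_take {P : Multiset ℝ} {k : ℕ} (hk : k < (P.sort (· ≤ ·)).length)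
    {a : ℝ} (ha : a ∈ (P.sort (· ≤ ·)).take (k + 1)) : a ≤ kth P (k + 1) := by
  rw [kth_add_one_eq_getElem P hk]
  exact (P.pairwise_sort _).le_getElem_of_mem_take hk ha

lemma kth_le_of_mem_drop {P : Multiset ℝ} {k : ℕ} (hk : k < (P.sort (· ≤ ·)).length)
    {a : ℝ} (ha : a ∈ (P.sort (· ≤ ·)).drop k) : kth P (k + 1) ≤ a := by
  rw [kth_add_one_eq_getElem P hk]
  exact (P.pairwise_sort _).getElem_le_of_mem_drop hk ha

lemma mmin_le_of_mem {U : Multiset ℝ} {u : ℝ} (hu : u ∈ U) : mmin U ≤ u := by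
  have hu' : u ∈ U.sort (· ≤ ·) := (Multiset.mem_sort _).mpr hu
  exact kth_le_of_mem_drop (List.length_pos_of_mem hu') hu'

lemma le_mmax_of_mem {U : Multiset ℝ} {u : ℝ} (hu : u ∈ U) : u ≤ mmax U := by
  have hu' : u ∈ U.sort (· ≤ ·) := (Multiset.mem_sort _).mpr hu
  have hlen : (U.sort (· ≤ ·)).length = Multiset.card U := Multiset.length_sort _
  have hpos : 0 < (U.sort (· ≤ ·)).length := List.length_pos_of_mem hu'
  have h := le_kth_of_mem_take (P := U) (k := (U.sort (· ≤ ·)).length - 1) (by omega)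
    (by rwa [Nat.sub_add_cancel hpos, List.take_length])
  rwa [Nat.sub_add_cancel hpos, hlen] at h

lemma coe_take_sort_le (P : Multiset ℝ) (k : ℕ) :
    (((P.sort (· ≤ ·)).take k : List ℝ) : Multiset ℝ) ≤ P := by
  conv_rhs => rw [← Multiset.sort_eq P (· ≤ ·)]
  exact Multiset.coe_le.mpr (List.take_sublist _ _).subperm

lemma coe_drop_sort_le (P : Multiset ℝ) (k : ℕ) :
    (((P.sort (· ≤ ·)).drop k : List ℝ) : Multiset ℝ) ≤ P := by
  conv_rhs => rw [← Multiset.sort_eq P (· ≤ ·)]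
  exact Multiset.coe_le.mpr (List.drop_sublist _ _).subperm

theorem stmt_0 (n f : ℕ) (hnf : n > 5 * f) (P U : Multiset ℝ)
    (hP : Multiset.card P = n) (hUP : U ≤ P) (m : ℕ) (hm : Multiset.card U = m)
    (hmf : m ≥ n - f) :
    mmin U ≤ kth P (2 * f + 1) ∧ kth P (2 * f + 1) ≤ mmax U := by
  classical
  have hlen : (P.sort (· ≤ ·)).length = n := by rw [Multiset.length_sort, hP]
  have hk : 2 * f < (P.sort (· ≤ ·)).length := by omega
  have hfaulty : Multiset.card (P - U) ≤ f := by
    rw [Multiset.card_sub hUP, hP, hm]; omega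
  constructor
  · obtain ⟨u, hu_low, hu⟩ := Multiset.exists_mem_of_card_sub_lt
      (coe_take_sort_le P (2 * f + 1)) hUP
      (by simp only [Multiset.coe_card, List.length_take]; omega)
    exact (mmin_le_of_mem hu).trans (le_kth_of_mem_take hk hu_low)
  · obtain ⟨u, hu_high, hu⟩ := Multiset.exists_mem_of_card_sub_lt
      (coe_drop_sort_le P (2 * f)) hUP
      (by simp only [Multiset.coe_card, List.length_drop]; omega)
    exact (kth_le_of_mem_drop hk hu_high).trans (le_mmax_of_mem hu)
end

section
/- Let n, f be natural numbers with n > 5f, let P be a multiset of n real numbers, and let U be a submultiset of P of cardinality m with m ≥ n − f. Then the (n−2f)-th smallest element of P lies in the interval [min U, max U], i.e., min U ≤ P_{n−2f} ≤ max U. -/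
/-! A counting argument: at most `k - 1` points of `P` lie strictly below `P_k` and at most
`card P - k` strictly above it. If `U ≤ P` lay entirely above `P_k` it would have at most
`card P - k` points, and entirely below `P_k` at most `k - 1`; for `k = n - 2f`,
`card P = n` and `card U ≥ n - f > 2f` both are impossible. -/

namespace List.SortedLE

variable {α : Type*} [LinearOrder α] {l : List α}

theorem length_filter_lt_getElem_le (hl : l.SortedLE) {i : ℕ} (hi : i < l.length) :
    (l.filter (· < l[i])).length ≤ i := by
  have hdrop : (l.drop i).filter (· < l[i]) = [] := by
    refine List.filter_eq_nil_iff.2 fun y hy => ?_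
    obtain ⟨j, hj, rfl⟩ := List.mem_iff_getElem.1 hy
    simpa [List.getElem_drop] using hl.getElem_le_getElem_of_le (Nat.le_add_right i j)
  generalize l[i] = x at hdrop ⊢
  calc (l.filter (· < x)).length
      = ((l.take i).filter (· < x)).length := by
        conv_lhs => rw [← List.take_append_drop i l]
        rw [List.filter_append, hdrop, List.append_nil]
    _ ≤ (l.take i).length := List.length_filter_le _ _
    _ ≤ i := List.length_take_le i l

theorem length_filter_getElem_lt_le (hl : l.SortedLE) {i : ℕ} (hi : i < l.length) :
    (l.filter (l[i] < ·)).length ≤ l.length - (i + 1) := by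
  have htake : (l.take (i + 1)).filter (l[i] < ·) = [] := by
    refine List.filter_eq_nil_iff.2 fun y hy => ?_
    obtain ⟨j, hj, rfl⟩ := List.mem_iff_getElem.1 hy
    have hji : j ≤ i := by simp only [List.length_take] at hj; omega
    simpa [List.getElem_take] using hl.getElem_le_getElem_of_le hji
  generalize l[i] = x at htake ⊢
  calc (l.filter (x < ·)).length
      = ((l.drop (i + 1)).filter (x < ·)).length := by
        conv_lhs => rw [← List.take_append_drop (i + 1) l]
        rw [List.filter_append, htake, List.nil_append]
    _ ≤ (l.drop (i + 1)).length := List.length_filter_le _ _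
    _ = l.length - (i + 1) := List.length_drop

end List.SortedLE

section Kth

variable {P U : Multiset ℝ} {k : ℕ}

theorem kth_eq_getElem (hk₁ : 1 ≤ k) (hk : k ≤ Multiset.card P) :
    kth P k = (P.sort (· ≤ ·))[k - 1]'(by rw [Multiset.length_sort]; omega) :=
  List.getD_eq_getElem _ _ _

theorem card_filter_eq_length_filter_sort (p : ℝ → Prop) [DecidablePred p] :
    Multiset.card (P.filter p) = ((P.sort (· ≤ ·)).filter p).length := by
  conv_lhs => rw [← Multiset.sort_eq P (· ≤ ·)]
  rw [Multiset.filter_coe, Multiset.coe_card]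

theorem card_filter_lt_kth_le (hk₁ : 1 ≤ k) (hk : k ≤ Multiset.card P) :
    Multiset.card (P.filter (· < kth P k)) ≤ k - 1 := by
  rw [card_filter_eq_length_filter_sort, kth_eq_getElem hk₁ hk]
  exact (P.pairwise_sort _).sortedLE.length_filter_lt_getElem_le _

theorem card_filter_kth_lt_le (hk₁ : 1 ≤ k) (hk : k ≤ Multiset.card P) :
    Multiset.card (P.filter (kth P k < ·)) ≤ Multiset.card P - k := by
  have hlen := Multiset.length_sort (s := P) (· ≤ ·)
  rw [card_filter_eq_length_filter_sort, kth_eq_getElem hk₁ hk]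
  have := (P.pairwise_sort (· ≤ ·)).sortedLE.length_filter_getElem_lt_le (i := k - 1) (by omega)
  omega

theorem mmin_le {y : ℝ} (hy : y ∈ U) : mmin U ≤ y := by
  by_contra! hlt
  have hmem : y ∈ U.filter (· < kth U 1) := Multiset.mem_filter.2 ⟨hy, hlt⟩
  have hU : 0 < Multiset.card U := Multiset.card_pos_iff_exists_mem.2 ⟨y, hy⟩
  have := card_filter_lt_kth_le le_rfl hU
  have := Multiset.card_pos_iff_exists_mem.2 ⟨y, hmem⟩
  omega

theorem le_mmax {y : ℝ} (hy : y ∈ U) : y ≤ mmax U := by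
  by_contra! hlt
  have hmem : y ∈ U.filter (kth U (Multiset.card U) < ·) := Multiset.mem_filter.2 ⟨hy, hlt⟩
  have hU : 0 < Multiset.card U := Multiset.card_pos_iff_exists_mem.2 ⟨y, hy⟩
  have := card_filter_kth_lt_le hU le_rfl
  have := Multiset.card_pos_iff_exists_mem.2 ⟨y, hmem⟩
  omega

theorem mmin_le_kth (hUP : U ≤ P) (hk₁ : 1 ≤ k) (hk : k ≤ Multiset.card P)
    (hU : Multiset.card P - k < Multiset.card U) : mmin U ≤ kth P k := by
  by_contra! hlt
  have hsub : U ≤ P.filter (kth P k < ·) :=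
    Multiset.le_filter.2 ⟨hUP, fun y hy => hlt.trans_le (mmin_le hy)⟩
  have := card_filter_kth_lt_le hk₁ hk
  have := Multiset.card_le_card hsub
  omega

theorem kth_le_mmax (hUP : U ≤ P) (hk₁ : 1 ≤ k) (hk : k ≤ Multiset.card U) :
    kth P k ≤ mmax U := by
  by_contra! hlt
  have hsub : U ≤ P.filter (· < kth P k) :=
    Multiset.le_filter.2 ⟨hUP, fun y hy => (le_mmax hy).trans_lt hlt⟩
  have := card_filter_lt_kth_le hk₁ (hk.trans (Multiset.card_le_card hUP))
  have := Multiset.card_le_card hsub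
  omega

end Kth

theorem stmt_1 (n f : ℕ) (hnf : n > 5 * f) (P U : Multiset ℝ)
    (hP : Multiset.card P = n) (hUP : U ≤ P) (m : ℕ) (hm : Multiset.card U = m)
    (hmf : m ≥ n - f) :
    mmin U ≤ kth P (n - 2 * f) ∧ kth P (n - 2 * f) ≤ mmax U :=
  ⟨mmin_le_kth hUP (by omega) (by omega) (by omega), kth_le_mmax hUP (by omega) (by omega)⟩
end

section
/- Let n, f be natural numbers with n > 5f, let P be a multiset of n real numbers, and let U be a submultiset of P of cardinality m with m ≥ n − f. Then for every element p of U, the destination dest(P,p) = (min(p, P_{2f+1}) + max(p, P_{n−2f}))/2 computed by the convergence algorithm lies in the interval [min U, max U]. (Cautiousness of Algorithm 1: correct robots always compute destinations within the range of positions held by correct robots, regardless of the positions of the Byzantine robots.) -/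
/-- The destination computed by Algorithm 1 by a robot at position `p` observing
the configuration `P` of `n` robots (at most `f` Byzantine): the midpoint of the
trimmed range `[min(p, P_{2f+1}), max(p, P_{n-2f})]`. -/
noncomputable def dest (n f : ℕ) (P : Multiset ℝ) (p : ℝ) : ℝ :=
  (min p (kth P (2 * f + 1)) + max p (kth P (n - 2 * f))) / 2

namespace List.SortedLE

variable {α : Type*} [Preorder α] [DecidableLT α] {L : List α} {x : α} {i : ℕ}

lemma succ_le_countP_lt (hL : L.SortedLE) (hi : i < L.length) (h : L[i] < x) :
    i + 1 ≤ L.countP (decide <| · < x) := by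
  have htake : (L.take (i + 1)).countP (decide <| · < x) = i + 1 := by
    rw [List.countP_eq_length.mpr, List.length_take, min_eq_left (by omega)]
    intro a ha
    obtain ⟨j, hj, rfl⟩ := List.getElem_of_mem ha
    rw [List.length_take] at hj
    rw [List.getElem_take]
    exact decide_eq_true ((hL.getElem_le_getElem_of_le (by omega)).trans_lt h)
  exact htake ▸ (List.take_sublist _ _).countP_le

lemma length_sub_le_countP_gt (hL : L.SortedLE) (hi : i < L.length) (h : x < L[i]) :
    L.length - i ≤ L.countP (decide <| x < ·) := by
  have hdrop : (L.drop i).countP (decide <| x < ·) = L.length - i := by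
    rw [List.countP_eq_length.mpr, List.length_drop]
    intro a ha
    obtain ⟨j, hj, rfl⟩ := List.getElem_of_mem ha
    rw [List.length_drop] at hj
    rw [List.getElem_drop]
    exact decide_eq_true (h.trans_le (hL.getElem_le_getElem_of_le (by omega)))
  exact hdrop ▸ (List.drop_sublist _ _).countP_le

end List.SortedLE

lemma Multiset.countP_le_card_sub_of_le {α : Type*} {p : α → Prop} [DecidablePred p]
    {U P : Multiset α} (hUP : U ≤ P) (hU : ∀ a ∈ U, ¬ p a) :
    P.countP p ≤ card P - card U := by
  obtain ⟨V, rfl⟩ := le_iff_exists_add.mp hUP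
  rw [countP_add, countP_eq_zero.mpr hU, card_add]
  have := countP_le_card p V
  omega

lemma Multiset.countP_lt_card_of_mem {α : Type*} {p : α → Prop} [DecidablePred p]
    {s : Multiset α} {a : α} (ha : a ∈ s) (hpa : ¬ p a) : s.countP p < card s :=
  (countP_le_card p s).lt_of_ne fun h => hpa (countP_eq_card.mp h a ha)

section OrderStatistics

variable {P U : Multiset ℝ} {k : ℕ} {x : ℝ}

lemma kth_eq_getElem_sort (hk : 1 ≤ k) (hkP : k ≤ Multiset.card P) :
    kth P k = (P.sort (· ≤ ·))[k - 1]'(by rw [Multiset.length_sort]; omega) :=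
  List.getD_eq_getElem _ _ _

lemma le_kth_of_countP_lt (hk : 1 ≤ k) (hkP : k ≤ Multiset.card P)
    (h : P.countP (· < x) < k) : x ≤ kth P k := by
  rw [kth_eq_getElem_sort hk hkP]
  by_contra! hlt
  have := (Multiset.pairwise_sort P _).sortedLE.succ_le_countP_lt _ hlt
  rw [← Multiset.coe_countP, Multiset.sort_eq] at this
  omega

lemma kth_le_of_countP_le (hk : 1 ≤ k) (hkP : k ≤ Multiset.card P)
    (h : P.countP (x < ·) ≤ Multiset.card P - k) : kth P k ≤ x := by
  rw [kth_eq_getElem_sort hk hkP]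
  by_contra! hlt
  have := (Multiset.pairwise_sort P _).sortedLE.length_sub_le_countP_gt _ hlt
  rw [← Multiset.coe_countP (p := (x < ·)), Multiset.sort_eq, Multiset.length_sort] at this
  omega

lemma mmin_le_s3 (hx : x ∈ U) : mmin U ≤ x :=
  kth_le_of_countP_le le_rfl (Multiset.card_pos_iff_exists_mem.mpr ⟨x, hx⟩)
    (Nat.le_sub_one_of_lt (Multiset.countP_lt_card_of_mem hx (lt_irrefl x)))

lemma le_mmax_s3 (hx : x ∈ U) : x ≤ mmax U :=
  le_kth_of_countP_lt (Multiset.card_pos_iff_exists_mem.mpr ⟨x, hx⟩) le_rfl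
    (Multiset.countP_lt_card_of_mem hx (lt_irrefl x))

end OrderStatistics

theorem stmt_3 (n f : ℕ) (hnf : n > 5 * f) (P U : Multiset ℝ)
    (hP : Multiset.card P = n) (hUP : U ≤ P) (m : ℕ) (hm : Multiset.card U = m)
    (hmf : m ≥ n - f) :
    ∀ p ∈ U, dest n f P p ∈ Set.Icc (mmin U) (mmax U) := by
  intro p hp
  have hbelow : P.countP (· < mmin U) ≤ f :=
    (Multiset.countP_le_card_sub_of_le hUP fun a ha => not_lt.mpr (mmin_le_s3 ha)).trans
      (by omega)
  have habove : P.countP (mmax U < ·) ≤ f :=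
    (Multiset.countP_le_card_sub_of_le hUP fun a ha => not_lt.mpr (le_mmax_s3 ha)).trans
      (by omega)
  have hlo : mmin U ≤ kth P (2 * f + 1) := le_kth_of_countP_lt (by omega) (by omega) (by omega)
  have hhi : kth P (n - 2 * f) ≤ mmax U := kth_le_of_countP_le (by omega) (by omega) (by omega)
  have hpmin := mmin_le_s3 hp
  have hpmax := le_mmax_s3 hp
  have hleft : min p (kth P (2 * f + 1)) ∈ Set.Icc (mmin U) (mmax U) :=
    ⟨le_min hpmin hlo, (min_le_left _ _).trans hpmax⟩
  have hright : max p (kth P (n - 2 * f)) ∈ Set.Icc (mmin U) (mmax U) :=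
    ⟨hpmin.trans (le_max_left _ _), max_le hpmax hhi⟩
  unfold dest
  constructor <;> linarith [hleft.1, hleft.2, hright.1, hright.2]
end

section
/- Let n, f be natural numbers with n > 5f, let P be a multiset of n real numbers, and let U be a submultiset of P of cardinality m with m ≥ n − f. Let B and b be real numbers, and suppose S is a submultiset of U of cardinality at least m − f such that every element of S is at most B − b. Then for every element p of S, the computed destination satisfies dest(P,p) ≤ B − b; that is, the robots of S compute destinations that again lie at most B − b. -/
/-! The `n - 2f`-th smallest observed position is at most `B - b`, because at least
`m - f ≥ n - 2f` observed positions (those of `S`) are. The upper end of the trimmed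
range is therefore at most `B - b`, and so is its lower end, which is at most `p`. -/

theorem List.Pairwise.getD_le_of_lt_countP {α : Type*} [LinearOrder α] {l : List α}
    (hl : l.Pairwise (· ≤ ·)) {c d : α} {k : ℕ} (hk : k < l.countP (· ≤ c)) :
    l.getD k d ≤ c := by
  induction l generalizing k with
  | nil => simp at hk
  | cons a l ih =>
    obtain ⟨ha, hl⟩ := List.pairwise_cons.1 hl
    cases k with
    | zero =>
      obtain ⟨x, hx, hxc⟩ := List.countP_pos_iff.1 (Nat.zero_lt_of_lt hk)
      have hax : a ≤ x := by
        rcases List.mem_cons.1 hx with rfl | hx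
        exacts [le_rfl, ha x hx]
      simpa using hax.trans (of_decide_eq_true hxc)
    | succ k =>
      have hk' : k < l.countP (· ≤ c) := by
        rw [List.countP_cons] at hk
        split_ifs at hk <;> omega
      simpa using ih hl hk'

theorem kth_succ_le_of_lt_card_filter (P : Multiset ℝ) {c : ℝ} {k : ℕ}
    (hk : k < Multiset.card (P.filter (· ≤ c))) : kth P (k + 1) ≤ c := by
  rw [kth, Nat.add_sub_cancel]
  refine (P.pairwise_sort (· ≤ ·)).getD_le_of_lt_countP ?_
  rwa [← Multiset.coe_countP, Multiset.sort_eq, Multiset.countP_eq_card_filter]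

theorem dest_le {n f : ℕ} {P : Multiset ℝ} {p c : ℝ} (hp : p ≤ c)
    (hupper : kth P (n - 2 * f) ≤ c) : dest n f P p ≤ c := by
  have hmin : min p (kth P (2 * f + 1)) ≤ c := (min_le_left _ _).trans hp
  have hmax : max p (kth P (n - 2 * f)) ≤ c := max_le hp hupper
  rw [dest]
  linarith

theorem stmt_11 (n f : ℕ) (hnf : n > 5 * f) (P U : Multiset ℝ)
    (hP : Multiset.card P = n) (hUP : U ≤ P) (m : ℕ) (hm : Multiset.card U = m)
    (hmf : m ≥ n - f) (B b : ℝ) (S : Multiset ℝ) (hSU : S ≤ U)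
    (hScard : Multiset.card S ≥ m - f) (hS : ∀ x ∈ S, x ≤ B - b) :
    ∀ p ∈ S, dest n f P p ≤ B - b := by
  intro p hp
  have hmn : m ≤ n := hm ▸ hP ▸ Multiset.card_le_card hUP
  have hSfilter : Multiset.card S ≤ Multiset.card (P.filter (· ≤ B - b)) :=
    Multiset.card_le_card (Multiset.le_filter.2 ⟨hSU.trans hUP, hS⟩)
  have hupper : kth P (n - 2 * f - 1 + 1) ≤ B - b :=
    kth_succ_le_of_lt_card_filter P (by omega)
  rw [Nat.sub_add_cancel (by omega)] at hupper
  exact dest_le (hS p hp) hupper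
end

section
/- Let n, f be natural numbers with n > 5f, let P be a multiset of n real numbers, and let U be a submultiset of P of cardinality m with m ≥ n − f. Let b be a real number. Then for every element u of U with u ≤ max U − b, the computed destination satisfies dest(P,u) ≤ max U − b/2. -/
/-! The lower end of the trimmed range is at most `u ≤ max U - b`. The upper end is at most
`max U`, because the `m ≥ n - f ≥ n - 2f` elements of `U` are all `≤ max U`, so the
`(n - 2f)`-th smallest element of `P` is too. Hence the midpoint is at most `max U - b/2`. -/

theorem le_kth_card {P : Multiset ℝ} {x : ℝ} (hx : x ∈ P) : x ≤ kth P (Multiset.card P) := by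
  set L := P.sort (· ≤ ·)
  have hxL : x ∈ L := (Multiset.mem_sort _).mpr hx
  have hlen : L.length - 1 < L.length := Nat.sub_lt (List.length_pos_of_mem hxL) one_pos
  calc x ≤ L.getLast (List.ne_nil_of_mem hxL) := (Multiset.pairwise_sort P _).rel_getLast hxL
    _ = kth P (Multiset.card P) := by
      rw [List.getLast_eq_getElem, kth, ← Multiset.length_sort (· ≤ ·),
        List.getD_eq_getElem _ _ hlen]

theorem kth_le_of_le_countP {P : Multiset ℝ} {k : ℕ} {M : ℝ} (hk : 0 < k)
    (hkM : k ≤ P.countP (· ≤ M)) : kth P k ≤ M := by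
  set L := P.sort (· ≤ ·)
  have hcount : P.countP (· ≤ M) = L.countP (fun x => decide (x ≤ M)) := by
    rw [← Multiset.coe_countP, Multiset.sort_eq]
  have hidx : k - 1 < L.length := by
    have := List.countP_le_length (p := fun x => decide (x ≤ M)) (l := L)
    omega
  rw [kth, List.getD_eq_getElem _ _ hidx]
  -- If the `k`-th entry exceeded `M`, so would all later ones, leaving at most `k - 1` entries `≤ M`.
  by_contra! hlt
  have htail : ∀ x ∈ L.drop (k - 1), L[k - 1] ≤ x := by
    have hpw := (Multiset.pairwise_sort P (· ≤ ·)).drop (i := k - 1)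
    rw [List.drop_eq_getElem_cons hidx, List.pairwise_cons] at hpw
    rw [List.drop_eq_getElem_cons hidx]
    rintro x (_ | ⟨_, hx⟩)
    · exact le_rfl
    · exact hpw.1 x hx
  have hdrop : (L.drop (k - 1)).countP (fun x => decide (x ≤ M)) = 0 :=
    List.countP_eq_zero.mpr fun x hx => by simpa using hlt.trans_le (htail x hx)
  have htake := List.countP_le_length (p := fun x => decide (x ≤ M)) (l := L.take (k - 1))
  rw [List.length_take] at htake
  rw [← List.take_append_drop (k - 1) L, List.countP_append, hdrop] at hcount
  omega

theorem stmt_12_general (n f : ℕ) (hnf : n > 5 * f) (P U : Multiset ℝ)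
    (hUP : U ≤ P) (m : ℕ) (hm : Multiset.card U = m)
    (hmf : m ≥ n - f) (b : ℝ) :
    ∀ u ∈ U, u ≤ mmax U - b → dest n f P u ≤ mmax U - b / 2 := by
  intro u hu hub
  have hU_le : ∀ x ∈ U, x ≤ mmax U := fun x hx => le_kth_card hx
  have hcount : n - 2 * f ≤ P.countP (· ≤ mmax U) :=
    calc n - 2 * f ≤ U.countP (· ≤ mmax U) := by rw [Multiset.countP_eq_card.mpr hU_le]; omega
      _ ≤ P.countP (· ≤ mmax U) := Multiset.countP_le_of_le _ hUP
  have hkth : kth P (n - 2 * f) ≤ mmax U := kth_le_of_le_countP (by omega) hcount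
  have hmin : min u (kth P (2 * f + 1)) ≤ mmax U - b := (min_le_left _ _).trans hub
  have hmax : max u (kth P (n - 2 * f)) ≤ mmax U := max_le (hU_le u hu) hkth
  rw [dest]
  linarith

theorem stmt_12 (n f : ℕ) (hnf : n > 5 * f) (P U : Multiset ℝ)
    (hP : Multiset.card P = n) (hUP : U ≤ P) (m : ℕ) (hm : Multiset.card U = m)
    (hmf : m ≥ n - f) (b : ℝ) :
    ∀ u ∈ U, u ≤ mmax U - b → dest n f P u ≤ mmax U - b / 2 :=
  stmt_12_general n f hnf P U hUP m hm hmf b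
end
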